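/- A word over the alphabet {E, N, W, S} is a fighting fish if and only if it can be obtained from the word ENWS by a finite sequence of the two strip-gluing operations: (upper strip gluing) replace an occurrence of a factor W^k with k ≥ 1 by the factor N W^k S; (lower strip gluing) replace an occurrence of a factor N^k with k ≥ 1 by the factor E N^k W. -/

import Mathlib

/-- The four-letter alphabet of steps. -/
inductive Letter : Type
  | E | N | W | S
deriving DecidableEq, Repr

open Letter

/-- Fighting fish: words obtainable from `ENWS` by upper, lower and double gluings. -/
inductive IsFF : List Letter → Prop
  | base : IsFF [E, N, W, S]
  | upper (u v : List Letter) :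
      IsFF (u ++ [W] ++ v) → IsFF (u ++ [N, W, S] ++ v)
  | lower (u v : List Letter) :
      IsFF (u ++ [N] ++ v) → IsFF (u ++ [E, N, W] ++ v)
  | double (u v : List Letter) :
      IsFF (u ++ [W, N] ++ v) → IsFF (u ++ [N, W] ++ v)

/-- Generalized fighting fish: words obtainable from the empty word by the
operations `∇_k` (replace `N^k` by `E N^k W`) and `△_k` (replace `W^k` by `N W^k S`),
for `k ≥ 0`. -/
inductive IsGFF : List Letter → Prop
  | base : IsGFF []
  | nabla (u v : List Letter) (k : ℕ) :
      IsGFF (u ++ List.replicate k N ++ v) →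
      IsGFF (u ++ [E] ++ List.replicate k N ++ [W] ++ v)
  | delta (u v : List Letter) (k : ℕ) :
      IsGFF (u ++ List.replicate k W ++ v) →
      IsGFF (u ++ [N] ++ List.replicate k W ++ [S] ++ v)

/-- The latitude of a word: number of `N`'s minus number of `S`'s. -/
def lat (w : List Letter) : ℤ := (w.count N : ℤ) - (w.count S : ℤ)

/-- The longitude of a word: number of `E`'s minus number of `W`'s. -/
def long (w : List Letter) : ℤ := (w.count E : ℤ) - (w.count W : ℤ)

/-- The size of a word: half its length. -/
def size (w : List Letter) : ℕ := w.length / 2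

/-- Words obtainable from `ENWS` by strip gluings: upper strip gluing replaces a
factor `W^k` (`k ≥ 1`) by `N W^k S`; lower strip gluing replaces a factor `N^k`
(`k ≥ 1`) by `E N^k W`. -/
inductive IsStripFF : List Letter → Prop
  | base : IsStripFF [E, N, W, S]
  | upper (u v : List Letter) (k : ℕ) (hk : 1 ≤ k) :
      IsStripFF (u ++ List.replicate k W ++ v) →
      IsStripFF (u ++ [N] ++ List.replicate k W ++ [S] ++ v)
  | lower (u v : List Letter) (k : ℕ) (hk : 1 ≤ k) :
      IsStripFF (u ++ List.replicate k N ++ v) →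
      IsStripFF (u ++ [E] ++ List.replicate k N ++ [W] ++ v)
/-! Every strip gluing is a single gluing followed by a run of double gluings (`WN ↦ NW`), which
slide the new letter through the strip. Conversely, strip fish are closed under double gluing: in
a strip fish the factor `WN` lies either inside the older word or astride the border of the last
glued strip, and in the second case swapping it just widens that strip by one cell. -/

namespace List

variable {α : Type*}

theorem append_eq_append_cons_cons {p s a b : List α} {x y : α}
    (h : p ++ s = a ++ x :: y :: b) :
    (∃ t, p = a ++ x :: y :: t ∧ b = t ++ s) ∨ (p = a ++ [x] ∧ s = y :: b) ∨
      ∃ t, a = p ++ t ∧ s = t ++ x :: y :: b := by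
  rcases append_eq_append_iff.1 h with ⟨t, ha, hs⟩ | ⟨c, rfl, hc⟩
  · exact .inr (.inr ⟨t, ha, hs⟩)
  · rcases c with _ | ⟨z, _ | ⟨z', t⟩⟩
    · exact .inr (.inr ⟨[], by simp, by simpa using hc.symm⟩)
    · obtain ⟨rfl, rfl⟩ := cons_eq_cons.1 hc
      exact .inr (.inl ⟨rfl, rfl⟩)
    · simp only [cons_append, cons.injEq] at hc
      obtain ⟨rfl, rfl, rfl⟩ := hc
      exact .inl ⟨t, rfl, rfl⟩

end List

open List

theorem upperStrip_append_eq_append_WN {k : ℕ} {v t b : List Letter}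
    (h : N :: (replicate k W ++ S :: v) = t ++ W :: N :: b) :
    ∃ t', t = N :: (replicate k W ++ S :: t') ∧ v = t' ++ W :: N :: b := by
  obtain ⟨t, rfl, hrest⟩ :
      ∃ t', t = N :: t' ∧ replicate k W ++ S :: v = t' ++ W :: N :: b := by
    simpa [cons_eq_append_iff] using h
  rcases append_eq_append_cons_cons hrest with ⟨_, hk, -⟩ | ⟨-, hs⟩ | ⟨t', rfl, hs⟩
  · have : N ∈ replicate k W := by simp [hk]
    simp at this
  · simp at hs
  · obtain ⟨t', rfl, rfl⟩ : ∃ t'', t' = S :: t'' ∧ v = t'' ++ W :: N :: b := by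
      simpa [cons_eq_append_iff] using hs
    exact ⟨t', rfl, rfl⟩

theorem lowerStrip_append_eq_append_WN {k : ℕ} {v t b : List Letter}
    (h : E :: (replicate k N ++ W :: v) = t ++ W :: N :: b) :
    (t = E :: replicate k N ∧ v = N :: b) ∨
      ∃ t', t = E :: (replicate k N ++ W :: t') ∧ v = t' ++ W :: N :: b := by
  obtain ⟨t, rfl, hrest⟩ :
      ∃ t', t = E :: t' ∧ replicate k N ++ W :: v = t' ++ W :: N :: b := by
    simpa [cons_eq_append_iff] using h
  rcases append_eq_append_cons_cons hrest with ⟨_, hk, -⟩ | ⟨hk, -⟩ | ⟨t', rfl, hs⟩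
  · have : W ∈ replicate k N := by simp [hk]
    simp at this
  · have : W ∈ replicate k N := by simp [hk]
    simp at this
  · rcases cons_eq_append_iff.1 hs with ⟨rfl, hv⟩ | ⟨t'', rfl, rfl⟩
    · exact .inl ⟨by simp, (cons_eq_cons.1 hv).2.symm⟩
    · exact .inr ⟨t'', rfl, rfl⟩

theorem IsStripFF.double {w : List Letter} (hw : IsStripFF w) {a b : List Letter}
    (h : w = a ++ W :: N :: b) : IsStripFF (a ++ N :: W :: b) := by
  induction hw generalizing a b with
  | base =>
    rcases a with _ | ⟨_, _ | ⟨_, _ | ⟨_, _ | ⟨_, _⟩⟩⟩⟩ <;> simp_all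
  | upper u v k hk hprev ih =>
    simp only [append_assoc, cons_append, nil_append] at h
    rcases append_eq_append_cons_cons h with ⟨t, rfl, rfl⟩ | ⟨rfl, hs⟩ | ⟨t, rfl, hs⟩
    · have := ih (a := a) (b := t ++ replicate k W ++ v) (by simp)
      simpa using upper (a ++ N :: W :: t) v k hk (by simpa using this)
    · obtain rfl : b = replicate k W ++ S :: v := (cons_eq_cons.1 hs).2.symm
      simpa [replicate_succ] using
        upper a v (k + 1) (by omega) (by simpa [replicate_succ] using hprev)
    · obtain ⟨t, rfl, rfl⟩ := upperStrip_append_eq_append_WN hs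
      have := ih (a := u ++ replicate k W ++ t) (b := b) (by simp)
      simpa using upper u (t ++ N :: W :: b) k hk (by simpa using this)
  | lower u v k hk hprev ih =>
    simp only [append_assoc, cons_append, nil_append] at h
    rcases append_eq_append_cons_cons h with ⟨t, rfl, rfl⟩ | ⟨-, hs⟩ | ⟨t, rfl, hs⟩
    · have := ih (a := a) (b := t ++ replicate k N ++ v) (by simp)
      simpa using lower (a ++ N :: W :: t) v k hk (by simpa using this)
    · simp at hs
    · rcases lowerStrip_append_eq_append_WN hs with ⟨rfl, rfl⟩ | ⟨t, rfl, rfl⟩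
      · simpa [replicate_succ'] using
          lower u b (k + 1) (by omega) (by simpa [replicate_succ'] using hprev)
      · have := ih (a := u ++ replicate k N ++ t) (b := b) (by simp)
        simpa using lower u (t ++ N :: W :: b) k hk (by simpa using this)

namespace IsFF

theorem slide_N_left (j : ℕ) {u v : List Letter} (h : IsFF (u ++ replicate j W ++ N :: v)) :
    IsFF (u ++ N :: (replicate j W ++ v)) := by
  induction j generalizing v with
  | zero => simpa using h
  | succ j ih =>
    have := double (u ++ replicate j W) v (by simpa [replicate_succ'] using h)
    simpa [replicate_succ'] using ih (v := W :: v) (by simpa using this)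

theorem slide_W_right (j : ℕ) {u v : List Letter} (h : IsFF (u ++ W :: (replicate j N ++ v))) :
    IsFF (u ++ replicate j N ++ W :: v) := by
  induction j generalizing u with
  | zero => simpa using h
  | succ j ih =>
    have := double u (replicate j N ++ v) (by simpa [replicate_succ] using h)
    simpa [replicate_succ] using ih (u := u ++ [N]) (by simpa using this)

theorem upperStrip (u v : List Letter) {k : ℕ} (hk : 1 ≤ k)
    (h : IsFF (u ++ replicate k W ++ v)) :
    IsFF (u ++ [N] ++ replicate k W ++ [S] ++ v) := by
  obtain ⟨j, rfl⟩ := Nat.exists_eq_add_of_le' hk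
  have := upper (u ++ replicate j W) v (by simpa [replicate_succ'] using h)
  simpa [replicate_succ'] using slide_N_left j (v := W :: S :: v) (by simpa using this)

theorem lowerStrip (u v : List Letter) {k : ℕ} (hk : 1 ≤ k)
    (h : IsFF (u ++ replicate k N ++ v)) :
    IsFF (u ++ [E] ++ replicate k N ++ [W] ++ v) := by
  obtain ⟨j, rfl⟩ := Nat.exists_eq_add_of_le' hk
  have := lower u (replicate j N ++ v) (by simpa [replicate_succ] using h)
  simpa [replicate_succ] using slide_W_right j (u := u ++ [E, N]) (by simpa using this)

theorem isStripFF {w : List Letter} (h : IsFF w) : IsStripFF w := by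
  induction h with
  | base => exact .base
  | upper u v _ ih => simpa using IsStripFF.upper u v 1 le_rfl (by simpa using ih)
  | lower u v _ ih => simpa using IsStripFF.lower u v 1 le_rfl (by simpa using ih)
  | double u v _ ih => simpa using ih.double (by simp)

end IsFF

theorem IsStripFF.isFF {w : List Letter} (h : IsStripFF w) : IsFF w := by
  induction h with
  | base => exact .base
  | upper u v _ hk _ ih => exact IsFF.upperStrip u v hk ih
  | lower u v _ hk _ ih => exact IsFF.lowerStrip u v hk ih

/-- A word is a fighting fish iff it can be obtained from `ENWS` by a finite
sequence of upper and lower strip gluings. -/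
theorem fightingFish_iff_stripGluings (w : List Letter) : IsFF w ↔ IsStripFF w :=
  ⟨IsFF.isStripFF, IsStripFF.isFF⟩
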